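/- arXiv:1511.06791 — 4 statements merged into one kernel-verified Lean document; each statement's English description precedes it below -/
import Mathlib

section
/- Fix an integer m > 1. In the ring of formal power series over ℤ/mℤ, the series B₀(q) = ∑_{n≥0} b(m·n) q^n satisfies B₀(q) = (∑_{j=0}^{m−1} (j+1) q^j) · B₀(q^m). -/
/-
Removing the parts equal to `1` from an `m`-ary partition of `N` and dividing the remaining parts
by `m` leaves an `m`-ary partition of some `t ≤ N / m`, and this is a bijection onto all such pairs,
so `b N = ∑_{t ≤ N / m} b t`. In particular `b` is constant on each block `m u, …, m u + m - 1`,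
so in `b (m n) = ∑_{t ≤ n} b t` the complete blocks contribute multiples of `m`, and
`b (m n) ≡ (n % m + 1) * b (m * (n / m)) [MOD m]`, which is the coefficient of `q ^ n` on the
right-hand side.
-/

open PowerSeries

/-- The number of `m`-ary partitions of `n`: partitions of `n` all of whose
parts are powers of `m`. -/
noncomputable def maryPartitions (m n : ℕ) : ℕ :=
  Nat.card {p : n.Partition // ∀ x ∈ p.parts, ∃ k : ℕ, x = m ^ k}

/-- Substitution of `q^m` for `q` in a formal power series: `F(q) ↦ F(q^m)`. -/
noncomputable def substPow (R : Type*) [Semiring R] (m : ℕ) (F : PowerSeries R) : PowerSeries R :=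
  PowerSeries.mk fun n => if m ∣ n then PowerSeries.coeff (n / m) F else 0

abbrev MaryPartition (m n : ℕ) := {p : n.Partition // ∀ x ∈ p.parts, ∃ k : ℕ, x = m ^ k}

namespace MaryPartition

variable {m N : ℕ}

lemma dvd_of_mem_of_ne_one (p : MaryPartition m N) {x : ℕ} (hx : x ∈ p.1.parts) (h1 : x ≠ 1) :
    m ∣ x := by
  obtain ⟨_ | k, rfl⟩ := p.2 x hx
  · exact absurd (pow_zero m) h1
  · exact dvd_pow_self m k.succ_ne_zero

def quotientParts (m : ℕ) (p : MaryPartition m N) : Multiset ℕ :=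
  (p.1.parts.filter (· ≠ 1)).map (· / m)

lemma quotientParts_map_mul (p : MaryPartition m N) :
    (quotientParts m p).map (· * m) = p.1.parts.filter (· ≠ 1) := by
  rw [quotientParts, Multiset.map_map]
  conv_rhs => rw [← Multiset.map_id (p.1.parts.filter (· ≠ 1))]
  refine Multiset.map_congr rfl fun x hx => ?_
  rw [Multiset.mem_filter] at hx
  exact Nat.div_mul_cancel (p.dvd_of_mem_of_ne_one hx.1 hx.2)

lemma replicate_add_quotientParts_map_mul (p : MaryPartition m N) :
    Multiset.replicate (p.1.parts.count 1) 1 + (quotientParts m p).map (· * m) = p.1.parts := by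
  rw [quotientParts_map_mul, ← Multiset.filter_eq', Multiset.filter_add_not]

lemma count_one_add_mul_sum_quotientParts (p : MaryPartition m N) :
    p.1.parts.count 1 + m * (quotientParts m p).sum = N := by
  conv_rhs => rw [← p.1.parts_sum, ← replicate_add_quotientParts_map_mul p]
  rw [Multiset.sum_add, Multiset.sum_replicate, smul_eq_mul, mul_one,
    Multiset.sum_map_mul_right, Multiset.map_id', mul_comm]

lemma exists_pow_of_mem_quotientParts (hm : 0 < m) (p : MaryPartition m N) {y : ℕ}
    (hy : y ∈ quotientParts m p) : ∃ k : ℕ, y = m ^ k := by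
  obtain ⟨x, hx, rfl⟩ := Multiset.mem_map.1 hy
  obtain ⟨hx, hx1⟩ := Multiset.mem_filter.1 hx
  obtain ⟨_ | k, rfl⟩ := p.2 x hx
  · exact absurd (pow_zero m) hx1
  · exact ⟨k, by rw [pow_succ, Nat.mul_div_cancel _ hm]⟩

def toSigma (hm : 0 < m) (p : MaryPartition m N) : Σ t : Fin (N / m + 1), MaryPartition m t :=
  ⟨⟨(quotientParts m p).sum, Nat.lt_succ_of_le <| (Nat.le_div_iff_mul_le hm).2 <| by
      have := count_one_add_mul_sum_quotientParts p; rw [mul_comm]; omega⟩,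
    ⟨⟨quotientParts m p, fun hy => by
        obtain ⟨k, rfl⟩ := exists_pow_of_mem_quotientParts hm p hy; positivity, rfl⟩,
      fun _ hy => exists_pow_of_mem_quotientParts hm p hy⟩⟩

def ofSigma (hm : 0 < m) (x : Σ t : Fin (N / m + 1), MaryPartition m t) : MaryPartition m N :=
  ⟨⟨Multiset.replicate (N - m * x.1) 1 + x.2.1.parts.map (· * m),
    fun hy => by
      rcases Multiset.mem_add.1 hy with hy | hy
      · rw [Multiset.eq_of_mem_replicate hy]; exact one_pos
      · obtain ⟨z, hz, rfl⟩ := Multiset.mem_map.1 hy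
        exact Nat.mul_pos (x.2.1.parts_pos hz) hm,
    by
      have := Nat.mul_le_of_le_div m _ _ (Nat.lt_succ_iff.1 x.1.2)
      rw [Multiset.sum_add, Multiset.sum_replicate, smul_eq_mul, mul_one,
        Multiset.sum_map_mul_right, Multiset.map_id', x.2.1.parts_sum, mul_comm m,
        Nat.sub_add_cancel this]⟩,
  fun y hy => by
    rcases Multiset.mem_add.1 hy with hy | hy
    · exact ⟨0, by rw [Multiset.eq_of_mem_replicate hy, pow_zero]⟩
    · obtain ⟨z, hz, rfl⟩ := Multiset.mem_map.1 hy
      obtain ⟨k, rfl⟩ := x.2.2 z hz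
      exact ⟨k + 1, (pow_succ m k).symm⟩⟩

lemma sigma_ext {k : ℕ} {x y : Σ t : Fin k, MaryPartition m t}
    (h : x.2.1.parts = y.2.1.parts) : x = y := by
  obtain ⟨t, p⟩ := x
  obtain ⟨s, q⟩ := y
  obtain rfl : t = s := Fin.ext (by rw [← p.1.parts_sum, h, q.1.parts_sum])
  exact congrArg _ (Subtype.ext (Nat.Partition.ext h))

lemma quotientParts_ofSigma (hm : 1 < m) (x : Σ t : Fin (N / m + 1), MaryPartition m t) :
    quotientParts m (ofSigma (zero_lt_one.trans hm) x) = x.2.1.parts := by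
  have hfilter : (ofSigma (zero_lt_one.trans hm) x).1.parts.filter (· ≠ 1)
      = x.2.1.parts.map (· * m) := by
    have hones : (Multiset.replicate (N - m * x.1) 1).filter (· ≠ 1) = 0 :=
      Multiset.filter_eq_nil.2 fun a ha => by simp [Multiset.eq_of_mem_replicate ha]
    have hmul : (x.2.1.parts.map (· * m)).filter (· ≠ 1) = x.2.1.parts.map (· * m) :=
      Multiset.filter_eq_self.2 fun a ha => by
        obtain ⟨z, hz, rfl⟩ := Multiset.mem_map.1 ha
        exact (hm.trans_le (Nat.le_mul_of_pos_left m (x.2.1.parts_pos hz))).ne'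
    rw [ofSigma, Multiset.filter_add, hones, hmul, zero_add]
  rw [quotientParts, hfilter, Multiset.map_map]
  conv_rhs => rw [← Multiset.map_id x.2.1.parts]
  exact Multiset.map_congr rfl fun z _ => Nat.mul_div_cancel z (zero_lt_one.trans hm)

def equivSigma (hm : 1 < m) :
    MaryPartition m N ≃ Σ t : Fin (N / m + 1), MaryPartition m t where
  toFun := toSigma (zero_lt_one.trans hm)
  invFun := ofSigma (zero_lt_one.trans hm)
  left_inv p := Subtype.ext <| Nat.Partition.ext <| by
    have := count_one_add_mul_sum_quotientParts p
    conv_rhs => rw [← replicate_add_quotientParts_map_mul p]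
    show Multiset.replicate (N - m * (quotientParts m p).sum) 1 + _ = _
    rw [show N - m * (quotientParts m p).sum = p.1.parts.count 1 by omega]
    rfl
  right_inv x := sigma_ext (quotientParts_ofSigma hm x)

end MaryPartition

open Finset

section Counting

variable {m : ℕ}

lemma maryPartitions_eq_sum_range (hm : 1 < m) (N : ℕ) :
    maryPartitions m N = ∑ t ∈ range (N / m + 1), maryPartitions m t := by
  rw [maryPartitions, Nat.card_congr (MaryPartition.equivSigma hm), Nat.card_sigma,
    ← Fin.sum_univ_eq_sum_range]
  rfl

lemma maryPartitions_mul_add_of_lt (hm : 1 < m) (u : ℕ) {r : ℕ} (hr : r < m) :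
    maryPartitions m (m * u + r) = maryPartitions m (m * u) := by
  rw [maryPartitions_eq_sum_range hm, maryPartitions_eq_sum_range hm, Nat.mul_add_div (by omega),
    Nat.div_eq_of_lt hr, add_zero, Nat.mul_div_cancel_left u (by omega)]

lemma sum_range_succ_eq_of_const_on_blocks {R : Type*} [Semiring R] (hm : 0 < m)
    (hmR : (m : R) = 0) {f : ℕ → R} (hf : ∀ u r, r < m → f (m * u + r) = f (m * u)) (n : ℕ) :
    ∑ t ∈ range (n + 1), f t = ((n % m + 1 : ℕ) : R) * f (m * (n / m)) := by
  have hblock (u : ℕ) {r : ℕ} (hr : r ≤ m) : ∑ i ∈ range r, f (m * u + i) = r * f (m * u) := by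
    rw [sum_congr rfl fun i hi => hf u i ((mem_range.1 hi).trans_le hr), sum_const, card_range,
      nsmul_eq_mul]
  have hfull (Q : ℕ) : ∑ t ∈ range (m * Q), f t = 0 := by
    induction Q with
    | zero => simp
    | succ Q ih => rw [Nat.mul_succ, sum_range_add, ih, hblock Q le_rfl, hmR, zero_mul, zero_add]
  have hn : n + 1 = m * (n / m) + (n % m + 1) := by rw [← add_assoc, Nat.div_add_mod]
  rw [hn, sum_range_add, hfull, zero_add, hblock _ (Nat.mod_lt n hm)]

lemma natCast_maryPartitions_mul (hm : 1 < m) (n : ℕ) :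
    (maryPartitions m (m * n) : ZMod m) = ((n % m : ℕ) + 1) * maryPartitions m (m * (n / m)) := by
  rw [maryPartitions_eq_sum_range hm, Nat.mul_div_cancel_left n (by omega), Nat.cast_sum,
    sum_range_succ_eq_of_const_on_blocks (by omega) (ZMod.natCast_self m)
      fun u r hr => by rw [maryPartitions_mul_add_of_lt hm u hr], Nat.cast_succ]

end Counting

lemma coeff_X_pow_mul_substPow {R : Type*} [Semiring R] {m j : ℕ} (hj : j < m) (F : R⟦X⟧)
    (n : ℕ) : coeff n (X ^ j * substPow R m F) = if n % m = j then coeff (n / m) F else 0 := by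
  rw [coeff_X_pow_mul', substPow, coeff_mk]
  by_cases h : n % m = j
  · subst h
    have hsub : n - n % m = m * (n / m) := by have := Nat.div_add_mod n m; omega
    rw [if_pos (Nat.mod_le n m), if_pos (Nat.dvd_sub_mod n), if_pos rfl, hsub,
      Nat.mul_div_cancel_left _ (Nat.zero_lt_of_lt hj)]
  · rw [if_neg h]
    split_ifs with hjn hdvd
    · exact absurd ((Nat.modEq_iff_dvd' hjn).2 hdvd).symm (by rwa [Nat.ModEq, Nat.mod_eq_of_lt hj])
    all_goals rfl

lemma coeff_sum_C_mul_X_pow_mul_substPow {R : Type*} [Semiring R] {m : ℕ} (hm : 0 < m)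
    (c : ℕ → R) (F : R⟦X⟧) (n : ℕ) :
    coeff n ((∑ j ∈ range m, C (c j) * X ^ j) * substPow R m F) = c (n % m) * coeff (n / m) F := by
  simp only [sum_mul, map_sum, mul_assoc, coeff_C_mul]
  rw [sum_congr rfl fun j hj => by rw [coeff_X_pow_mul_substPow (mem_range.1 hj)]]
  simp only [mul_ite, mul_zero, sum_ite_eq, mem_range, Nat.mod_lt n hm, if_true]

theorem B0_mod_m_functional_equation (m : ℕ) (hm : 1 < m) :
    let B₀ : PowerSeries (ZMod m) := PowerSeries.mk fun n => (maryPartitions m (m * n) : ZMod m)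
    B₀ = (∑ j ∈ Finset.range m, PowerSeries.C ((j : ZMod m) + 1) * X ^ j) *
      substPow (ZMod m) m B₀ := by
  intro B₀
  ext n
  rw [coeff_sum_C_mul_X_pow_mul_substPow (by omega) (fun j => (j : ZMod m) + 1)]
  simp only [B₀, coeff_mk]
  exact natCast_maryPartitions_mul hm n
end

section
/- Fix an integer m > 1. Let C(q) = ∑_{n≥0} c(n) q^n be the unique formal power series over ℤ satisfying (1−q)·C(q) = (1−q) + q·C(q^m). Then for every nonnegative integer i and every j with 0 ≤ j ≤ m−1, c(m·(m·i + j) + 1) ≡ 1 + j·c(m·i + 1) (mod m). -/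
open PowerSeries Finset

/-!
Comparing coefficients gives `c 0 = c 1 = 1` and `c (n + 1) = c n + [m ∣ n] c (n / m)` for `n ≥ 1`.
Hence `c` is constant on each block `m k + 1, …, m k + m`, and `c (m k + 1) = ∑_{t ≤ k} c t`.
Splitting `∑_{t ≤ m i + j} c t` into `c 0`, the `i` full blocks below `m i` (each contributing
`m` times a single value) and the `j` terms `c (m i + 1) = ⋯ = c (m i + j)` gives
`c (m (m i + j) + 1) = 1 + m ∑_{k < i} c (m k + 1) + j c (m i + 1)`.
-/

namespace NoGap

variable {R : Type*} [Ring R] {m : ℕ} {C : PowerSeries R}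

theorem coeff_zero (hC : (1 - X) * C = (1 - X) + X * substPow R m C) : coeff 0 C = 1 := by
  simpa using congrArg (coeff 0) hC

theorem coeff_succ (hC : (1 - X) * C = (1 - X) + X * substPow R m C) (n : ℕ) :
    coeff (n + 1) C =
      coeff n C - (if n = 0 then 1 else 0) + if m ∣ n then coeff (n / m) C else 0 := by
  have h := congrArg (coeff (n + 1)) hC
  simp only [sub_mul, one_mul, map_sub, map_add, coeff_succ_X_mul, coeff_one, coeff_X,
    substPow, coeff_mk, add_eq_right, Nat.add_eq_zero_iff, one_ne_zero, and_false, if_false,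
    zero_sub, sub_eq_iff_eq_add] at h
  rw [h]
  abel

theorem coeff_one (hC : (1 - X) * C = (1 - X) + X * substPow R m C) : coeff 1 C = 1 := by
  simpa [coeff_zero hC] using coeff_succ hC 0

theorem coeff_succ_of_not_dvd (hC : (1 - X) * C = (1 - X) + X * substPow R m C) {n : ℕ}
    (hn : n ≠ 0) (hmn : ¬m ∣ n) : coeff (n + 1) C = coeff n C := by
  simpa [hn, hmn] using coeff_succ hC n

theorem coeff_mul_add_one_add (hC : (1 - X) * C = (1 - X) + X * substPow R m C) (k : ℕ)
    {r : ℕ} (hr : r < m) : coeff (m * k + 1 + r) C = coeff (m * k + 1) C := by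
  induction r with
  | zero => rfl
  | succ r ih =>
    have hndvd : ¬m ∣ m * k + (r + 1) := by
      rw [Nat.dvd_add_right (dvd_mul_right m k)]
      exact Nat.not_dvd_of_pos_of_lt r.succ_pos hr
    rw [← ih (by omega), show m * k + 1 + (r + 1) = m * k + (r + 1) + 1 by omega,
      coeff_succ_of_not_dvd hC (by omega) hndvd, show m * k + (r + 1) = m * k + 1 + r by omega]

theorem coeff_mul_succ_add_one (hC : (1 - X) * C = (1 - X) + X * substPow R m C) (hm : 0 < m)
    (k : ℕ) : coeff (m * (k + 1) + 1) C = coeff (m * k + 1) C + coeff (k + 1) C := by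
  have hblock : m * (k + 1) = m * k + 1 + (m - 1) := by rw [mul_add_one]; omega
  rw [coeff_succ hC, if_neg (by positivity), if_pos (dvd_mul_right m _),
    Nat.mul_div_cancel_left _ hm, hblock, coeff_mul_add_one_add hC k (by omega)]
  simp

theorem coeff_mul_add_one_eq_sum (hC : (1 - X) * C = (1 - X) + X * substPow R m C)
    (hm : 0 < m) (k : ℕ) : coeff (m * k + 1) C = ∑ t ∈ range (k + 1), coeff t C := by
  induction k with
  | zero => simp [coeff_zero hC, coeff_one hC]
  | succ k ih => rw [coeff_mul_succ_add_one hC hm, ih, sum_range_succ _ (k + 1)]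

theorem sum_range_mul_coeff_succ (hC : (1 - X) * C = (1 - X) + X * substPow R m C) (i : ℕ) :
    ∑ t ∈ range (m * i), coeff (t + 1) C = m * ∑ k ∈ range i, coeff (m * k + 1) C := by
  induction i with
  | zero => simp
  | succ i ih =>
    have hblock : ∑ r ∈ range m, coeff (m * i + r + 1) C = m * coeff (m * i + 1) C := by
      simp_rw [add_right_comm _ _ 1]
      rw [sum_congr rfl fun r hr => coeff_mul_add_one_add hC i (mem_range.mp hr)]
      simp
    rw [mul_add_one, sum_range_add, ih, hblock, sum_range_succ, mul_add]

theorem coeff_mul_mul_add_add_one (hC : (1 - X) * C = (1 - X) + X * substPow R m C)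
    (hm : 0 < m) (i : ℕ) {j : ℕ} (hj : j ≤ m) :
    coeff (m * (m * i + j) + 1) C =
      1 + m * ∑ k ∈ range i, coeff (m * k + 1) C + j * coeff (m * i + 1) C := by
  have hpartial : ∑ r ∈ range j, coeff (m * i + 1 + r) C = j * coeff (m * i + 1) C := by
    rw [sum_congr rfl fun r hr => coeff_mul_add_one_add hC i ((mem_range.mp hr).trans_le hj)]
    simp
  rw [coeff_mul_add_one_eq_sum hC hm, add_right_comm, sum_range_add, hpartial,
    sum_range_succ', sum_range_mul_coeff_succ hC, coeff_zero hC, add_comm 1]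

end NoGap

theorem noGap_mod_m (m : ℕ) (hm : 1 < m) (C : PowerSeries ℤ)
    (hC : (1 - X) * C = (1 - X) + X * substPow ℤ m C) (c : ℕ → ℤ)
    (hc : ∀ n, c n = PowerSeries.coeff n C) (i j : ℕ) (hj : j ≤ m - 1) :
    c (m * (m * i + j) + 1) ≡ 1 + (j : ℤ) * c (m * i + 1) [ZMOD (m : ℤ)] := by
  rw [hc, hc, NoGap.coeff_mul_mul_add_add_one hC (by omega) i (by omega), add_right_comm]
  exact Int.modEq_add_fac_self
end

section
/- Fix an integer m > 1. Let C(q) = ∑_{n≥0} c(n) q^n be the unique formal power series over ℤ satisfying (1−q)·C(q) = (1−q) + q·C(q^m), and let C₁(q) = ∑_{n≥0} c(m·n+1) q^n. Then C₁ satisfies the functional equation (1−q)² · C₁(q) = (1−q) + q·(1−q^m) · C₁(q^m). -/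
open PowerSeries

/-!
Write `C = 1 + q T`. The functional equation says `(1 - q) T = C(q^m)`, so consecutive
coefficients of `T` differ only at multiples of `m`, and there by a coefficient of `C`.
Hence `T` is constant on the blocks `[m n, m n + m)`, and keeping every `m`-th coefficient of
`T`, which gives `C₁`, yields `(1 - q) C₁ = C`. Substituting this into the functional equation,
together with `C(q^m) = (1 - q^m) C₁(q^m)`, gives the claim.
-/

namespace PowerSeries

variable {R : Type*} [CommRing R]

theorem substPow_eq_expand {m : ℕ} (hm : m ≠ 0) (F : R⟦X⟧) :
    substPow R m F = expand m hm F := by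
  ext n
  simp [substPow, coeff_expand]

theorem coeff_zero_one_sub_X_mul (F : R⟦X⟧) : coeff 0 ((1 - X) * F) = coeff 0 F := by
  simp [sub_mul]

theorem coeff_succ_one_sub_X_mul (k : ℕ) (F : R⟦X⟧) :
    coeff (k + 1) ((1 - X) * F) = coeff (k + 1) F - coeff k F := by
  simp [sub_mul]

noncomputable def decimate (m : ℕ) (F : R⟦X⟧) : R⟦X⟧ :=
  mk fun n => coeff (m * n) F

@[simp]
theorem coeff_decimate (m n : ℕ) (F : R⟦X⟧) : coeff n (decimate m F) = coeff (m * n) F :=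
  coeff_mk _ _

section Decimate

variable {m : ℕ} (hm : m ≠ 0) {F G : R⟦X⟧} (h : (1 - X) * F = expand m hm G)
include h

theorem coeff_mul_add_eq_of_one_sub_X_mul_eq_expand (n : ℕ) {i : ℕ} (hi : i < m) :
    coeff (m * n + i) F = coeff (m * n) F := by
  induction i with
  | zero => rfl
  | succ i ih =>
    have hndvd : ¬ m ∣ m * n + (i + 1) := by
      rw [Nat.dvd_add_right (dvd_mul_right m n)]
      exact Nat.not_dvd_of_pos_of_lt i.succ_pos hi
    have hstep := congrArg (coeff (m * n + i + 1)) h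
    rw [coeff_succ_one_sub_X_mul, add_assoc, coeff_expand_of_not_dvd m hm G hndvd] at hstep
    rw [← ih (by omega), ← sub_eq_zero, ← hstep]

theorem one_sub_X_mul_decimate_of_one_sub_X_mul_eq_expand :
    (1 - X) * decimate m F = G := by
  ext (_ | n)
  · rw [coeff_zero_one_sub_X_mul, coeff_decimate, mul_zero]
    simpa using congrArg (coeff 0) h
  · have hlast := congrArg (coeff (m * n + (m - 1) + 1)) h
    have hblock : m * n + (m - 1) + 1 = m * (n + 1) := by
      rw [Nat.mul_succ]; omega
    rw [coeff_succ_one_sub_X_mul, hblock, coeff_expand_mul,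
      coeff_mul_add_eq_of_one_sub_X_mul_eq_expand hm h n (by omega)] at hlast
    rw [coeff_succ_one_sub_X_mul, coeff_decimate, coeff_decimate, hlast]

end Decimate

theorem one_sub_X_mul_shift_of_one_sub_X_mul_eq {F E : R⟦X⟧}
    (h : (1 - X) * F = (1 - X) + X * E) :
    (1 - X) * mk (fun p => coeff (p + 1) F) = E := by
  have hconst : constantCoeff F = 1 := by
    have h₀ := congrArg (coeff 0) h
    rw [coeff_zero_one_sub_X_mul] at h₀
    simpa using h₀
  rw [eq_X_mul_shift_add_const F, hconst, map_one] at h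
  exact X_mul_cancel (by linear_combination h)

end PowerSeries

theorem C1_functional_equation (m : ℕ) (hm : 1 < m) (C : PowerSeries ℤ)
    (hC : (1 - X) * C = (1 - X) + X * substPow ℤ m C) :
    let C₁ : PowerSeries ℤ := PowerSeries.mk fun n => PowerSeries.coeff (m * n + 1) C
    (1 - X) ^ 2 * C₁ = (1 - X) + X * (1 - X ^ m) * substPow ℤ m C₁ := by
  intro C₁
  have hm₀ : m ≠ 0 := by omega
  rw [substPow_eq_expand hm₀] at hC ⊢
  have hC₁ : (1 - X) * C₁ = C := by
    have hdecimate : decimate m (mk fun p => coeff (p + 1) C) = C₁ := by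
      ext n
      simp [C₁]
    rw [← hdecimate]
    exact one_sub_X_mul_decimate_of_one_sub_X_mul_eq_expand hm₀
      (one_sub_X_mul_shift_of_one_sub_X_mul_eq hC)
  calc (1 - X) ^ 2 * C₁ = (1 - X) * C := by rw [← hC₁]; ring
    _ = (1 - X) + X * expand m hm₀ C := hC
    _ = (1 - X) + X * (1 - X ^ m) * expand m hm₀ C₁ := by
      rw [← hC₁, map_mul, map_sub, map_one, expand_X]; ring
end

section
/- Fix an integer m > 1. In the ring of formal power series over ℤ/mℤ, the series C₁(q) = ∑_{n≥0} c(m·n+1) q^n satisfies (1−q)·C₁(q) = 1 + (1−q)·(∑_{j=0}^{m−1} j·q^j) · C₁(q^m), i.e., C₁(q) ≡ 1/(1−q) + (∑_{j=0}^{m−1} j·q^j) · C₁(q^m) (mod m). -/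
/-!
Reading `(1 - q) C(q) = (1 - q) + q C(q^m)` coefficientwise, `c(n + 1) = c(n) + c(n / m)` when
`m ∣ n ≠ 0` and `c(n + 1) = c(n)` otherwise (`n ≠ 0`), with `c(0) = c(1) = 1`. So `c` is constant
on each block `mq + 1, …, mq + m`, and `a(n) = c(mn + 1)` satisfies `a(0) = 1`,
`a(k + 1) = a(k) + a(⌊k / m⌋)`; that is, `(1 - q) C₁(q) = 1 + q (1 + q + ⋯ + q^{m-1}) C₁(q^m)`
already over `ℤ`. Finally `(1 - q) ∑_{j<m} j q^j = q (1 + q + ⋯ + q^{m-1}) - m q^m`, and the last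
term vanishes modulo `m`.
-/

open PowerSeries

open Finset

variable {R : Type*}

theorem coeff_substPow [Semiring R] (m n : ℕ) (F : R⟦X⟧) :
    coeff n (substPow R m F) = if m ∣ n then coeff (n / m) F else 0 :=
  PowerSeries.coeff_mk _ _

theorem sum_range_X_pow_mul_substPow [CommSemiring R] {m : ℕ} (hm : 0 < m) (F : R⟦X⟧) :
    (∑ j ∈ range m, X ^ j) * substPow R m F = PowerSeries.mk fun n => coeff (n / m) F := by
  ext n
  rw [sum_mul, map_sum, PowerSeries.coeff_mk,
    sum_eq_single_of_mem (n % m) (mem_range.2 (Nat.mod_lt n hm))]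
  · rw [coeff_X_pow_mul', if_pos (Nat.mod_le n m), coeff_substPow,
      ← Nat.mul_div_self_eq_mod_sub_self, if_pos (dvd_mul_right m _), Nat.mul_div_cancel_left _ hm]
  · intro j hj hjn
    rw [coeff_X_pow_mul', coeff_substPow]
    split_ifs with hjle hdvd
    · obtain ⟨t, ht⟩ := hdvd
      refine absurd ?_ hjn
      rw [show n = m * t + j by omega, Nat.mul_add_mod, Nat.mod_eq_of_lt (mem_range.1 hj)]
    all_goals rfl

theorem one_sub_mul_sum_range_natCast_mul_pow [CommRing R] (x : R) (m : ℕ) :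
    (1 - x) * ∑ j ∈ range m, (j : R) * x ^ j = x * ∑ j ∈ range m, x ^ j - m * x ^ m := by
  induction m with
  | zero => simp
  | succ m ih => rw [sum_range_succ, sum_range_succ, mul_add, ih]; push_cast; ring

theorem one_sub_X_mul_eq_one_add_X_mul_iff [CommRing R] {F G : R⟦X⟧} :
    (1 - X) * F = 1 + X * G ↔
      coeff 0 F = 1 ∧ ∀ n, coeff (n + 1) F = coeff n F + coeff n G := by
  rw [PowerSeries.ext_iff, ← Nat.and_forall_add_one]
  simp [sub_mul, coeff_succ_X_mul, coeff_one, sub_eq_iff_eq_add']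

def SolvesFunctionalEq [CommRing R] (m : ℕ) (C : R⟦X⟧) : Prop :=
  (1 - X) * C = (1 - X) + X * substPow R m C

namespace SolvesFunctionalEq

variable [CommRing R] {m : ℕ} {C : R⟦X⟧}

theorem coeff_recurrence (hC : SolvesFunctionalEq m C) :
    coeff 0 C = 1 ∧ ∀ n, coeff (n + 1) C =
      coeff n C + ((if m ∣ n then coeff (n / m) C else 0) - if n = 0 then 1 else 0) := by
  have h : (1 - X) * C = 1 + X * (substPow R m C - 1) := by rw [hC]; ring
  simpa [coeff_substPow, coeff_one] using one_sub_X_mul_eq_one_add_X_mul_iff.1 h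

theorem coeff_one (hC : SolvesFunctionalEq m C) : coeff 1 C = 1 := by
  obtain ⟨h0, hsucc⟩ := hC.coeff_recurrence
  simp [hsucc 0, h0]

theorem coeff_mul_add_succ (hC : SolvesFunctionalEq m C) (q : ℕ) {r : ℕ} (hr : r < m) :
    coeff (m * q + r + 1) C = coeff (m * q + 1) C := by
  induction r with
  | zero => rfl
  | succ r ih =>
    have hndvd : ¬ m ∣ m * q + (r + 1) := by
      rw [Nat.dvd_add_right (dvd_mul_right m q)]
      exact Nat.not_dvd_of_pos_of_lt r.succ_pos hr
    rw [hC.coeff_recurrence.2, if_neg hndvd, if_neg (by omega), sub_zero, add_zero, ← add_assoc,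
      ih (by omega)]

theorem coeff_succ_eq_coeff_mul_div_add_one (hC : SolvesFunctionalEq m C) (hm : 0 < m) (k : ℕ) :
    coeff (k + 1) C = coeff (m * (k / m) + 1) C := by
  conv_lhs => rw [← Nat.div_add_mod k m]
  exact hC.coeff_mul_add_succ _ (Nat.mod_lt k hm)

theorem coeff_mul_succ_add_one (hC : SolvesFunctionalEq m C) (hm : 0 < m) (k : ℕ) :
    coeff (m * (k + 1) + 1) C = coeff (m * k + 1) C + coeff (m * (k / m) + 1) C := by
  have hlast : coeff (m * (k + 1)) C = coeff (m * k + 1) C := by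
    rw [show m * (k + 1) = m * k + (m - 1) + 1 by rw [mul_add]; omega]
    exact hC.coeff_mul_add_succ k (by omega)
  rw [hC.coeff_recurrence.2, if_pos (dvd_mul_right m _), if_neg (by positivity),
    Nat.mul_div_cancel_left _ hm, hlast, hC.coeff_succ_eq_coeff_mul_div_add_one hm k, sub_zero]

end SolvesFunctionalEq

theorem C1_mod_m_functional_equation (m : ℕ) (hm : 1 < m) (C : PowerSeries ℤ)
    (hC : (1 - X) * C = (1 - X) + X * substPow ℤ m C) :
    let C₁ : PowerSeries (ZMod m) :=
      PowerSeries.mk fun n => ((PowerSeries.coeff (m * n + 1) C : ℤ) : ZMod m)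
    (1 - X) * C₁ =
      1 + (1 - X) * (∑ j ∈ Finset.range m, PowerSeries.C (j : ZMod m) * X ^ j) *
        substPow (ZMod m) m C₁ := by
  intro C₁
  have hm₀ : 0 < m := by omega
  have hC' : SolvesFunctionalEq m C := hC
  have hC₁ : (1 - X) * C₁ = 1 + X * ((∑ j ∈ range m, X ^ j) * substPow (ZMod m) m C₁) := by
    rw [sum_range_X_pow_mul_substPow hm₀, one_sub_X_mul_eq_one_add_X_mul_iff]
    refine ⟨?_, fun n => ?_⟩
    · simp [C₁, hC'.coeff_one]
    · simp [C₁, hC'.coeff_mul_succ_add_one hm₀]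
  have hweights : (1 - X) * ∑ j ∈ range m, PowerSeries.C (j : ZMod m) * X ^ j =
      X * ∑ j ∈ range m, X ^ j := by
    simp_rw [map_natCast]
    rw [one_sub_mul_sum_range_natCast_mul_pow, ← map_natCast PowerSeries.C, ZMod.natCast_self,
      map_zero, zero_mul, sub_zero]
  rw [hC₁, hweights, mul_assoc]
end
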